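/- Let W be a Coxeter group and J a subset of simple reflections. Define Q_J = {(v,w) ∈ W × W^J : v ≤ w}, with relation (v,w) ⪯ (v',w') iff there exists r ∈ W_J such that v' ≤ vr ≤ wr ≤ w'. Then for (u,u), (v,w), (v',w') ∈ Q_J, the conjunction (u,u) ⪯ (v,w) and (v,w) ⪯ (v',w') holds if and only if there exist r, r' ∈ W_J with ℓ(vr') = ℓ(v) + ℓ(r') such that v' ≤ vr' ≤ ur ≤ wr' ≤ w'. -/

import Mathlib

/-
Both directions transport a Bruhat interval `x ≤ a ≤ y` along an element `r ∈ W_J` with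
`ℓ (y r) = ℓ y + ℓ r`, one letter of a reduced `J`-word for `r` at a time. For a simple reflection
`s` with `y < y s`, the lifting property of the Bruhat order puts `a` or `a s` between `x s` and
`y s`; conversely, if `x < x s` and `x s ≤ a ≤ y s`, then `a` or `a s` lies between `x` and `y`.
Since `u` and `w` have no right descents in `J`, right multiplication by `W_J` is length-additive
on them, which supplies the additivity needed along the way.

The lifting property comes from the subword property, proved together with it by induction on
length. Both rest on the strong exchange property, obtained from the action of `W` on `W × ℤˣ`
whose sign records the parity of the occurrences of a reflection in right inversion sequences.
-/

variable {B W : Type*} [Group W]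

/-- `t` is a reflection of the Coxeter system `cs`, i.e. a conjugate of a simple reflection. -/
def IsCoxReflection {M : CoxeterMatrix B} (cs : CoxeterSystem M W) (t : W) : Prop :=
  ∃ (g : W) (i : B), t = g * cs.simple i * g⁻¹

/-- One step in the Bruhat order: multiply on the right by a reflection, increasing length. -/
def BruhatStep {M : CoxeterMatrix B} (cs : CoxeterSystem M W) (u w : W) : Prop :=
  cs.length u < cs.length w ∧ ∃ t : W, IsCoxReflection cs t ∧ w = u * t

/-- The Bruhat order on a Coxeter group: reflexive-transitive closure of `BruhatStep`. -/
def BruhatLE {M : CoxeterMatrix B} (cs : CoxeterSystem M W) : W → W → Prop :=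
  Relation.ReflTransGen (BruhatStep cs)

/-- The order relation on `Q_J`: `(v,w) ⪯ (v',w')` iff there is `r ∈ W_J` with `v*r`
length-additive and `v' ≤ v*r ≤ w*r ≤ w'`. -/
def QJle {M : CoxeterMatrix B} (cs : CoxeterSystem M W) (J : Set B)
    (v w v' w' : W) : Prop :=
  ∃ r ∈ Subgroup.closure (cs.simple '' J),
    cs.length (v * r) = cs.length v + cs.length r ∧
    BruhatLE cs v' (v * r) ∧ BruhatLE cs (v * r) (w * r) ∧ BruhatLE cs (w * r) w'

namespace CoxeterSystem

variable {M : CoxeterMatrix B} (cs : CoxeterSystem M W)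

local prefix:100 "s" => cs.simple
local prefix:100 "π" => cs.wordProd
local prefix:100 "ℓ" => cs.length
local prefix:100 "ris " => cs.rightInvSeq
local prefix:100 "lis " => cs.leftInvSeq

theorem prod_map_alternatingWord {G : Type*} [Monoid G] (f : B → G) (i j : B) (p : ℕ) :
    ((alternatingWord i j (2 * p)).map f).prod = (f i * f j) ^ p := by
  induction p with
  | zero => simp [alternatingWord]
  | succ p ih =>
    rw [show 2 * (p + 1) = 2 * p + 1 + 1 by ring, alternatingWord_succ', alternatingWord_succ']
    simp [ih, pow_succ', mul_assoc]

theorem rightInvSeq_eq_map_leftInvSeq (ω : List B) :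
    ris ω = (lis ω).map (MulAut.conj (π ω)⁻¹) := by
  induction ω with
  | nil => simp
  | cons i ω ih =>
    simp only [rightInvSeq, leftInvSeq, ih, List.map_cons, List.map_map, wordProd_cons,
      MulAut.conj_apply, mul_inv_rev, inv_simple, inv_inv, List.cons.injEq]
    refine ⟨by simp [mul_assoc], congrArg₂ _ (funext fun x => ?_) rfl⟩
    simp [mul_assoc]

section ReflectionRepresentation

variable [DecidableEq W]

def reflPerm (i : B) : Equiv.Perm (W × ℤˣ) :=
  Function.Involutive.toPerm (fun p => (s i * p.1 * s i, if p.1 = s i then -p.2 else p.2)) <| by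
    rintro ⟨t, ε⟩
    have hconj : s i * t * s i = s i ↔ t = s i := by
      constructor
      · intro h
        simpa [mul_assoc] using congrArg (fun x => s i * x * s i) h
      · rintro rfl
        simp
    refine Prod.ext (by simp [mul_assoc]) ?_
    by_cases ht : t = s i
    · simp [ht]
    · simp only [if_neg ht, if_neg (mt hconj.1 ht)]

theorem reflPerm_apply (i : B) (t : W) (ε : ℤˣ) :
    cs.reflPerm i (t, ε) = (s i * t * s i, if t = s i then -ε else ε) :=
  rfl

theorem prod_map_reflPerm_apply (ω : List B) (t : W) (ε : ℤˣ) :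
    (ω.map cs.reflPerm).prod (t, ε) = (π ω * t * (π ω)⁻¹, ε * (-1) ^ (ris ω).count t) := by
  induction ω with
  | nil => simp
  | cons i ω ih =>
    have hcond : π ω * t * (π ω)⁻¹ = s i ↔ (π ω)⁻¹ * s i * π ω = t := by
      constructor <;> intro h <;> rw [← h] <;> group
    simp only [List.map_cons, List.prod_cons, Equiv.Perm.mul_apply, ih, reflPerm_apply,
      rightInvSeq, List.count_cons, beq_iff_eq, hcond, wordProd_cons, mul_inv_rev, inv_simple]
    refine Prod.ext (by simp only; group) ?_
    split_ifs <;> simp [pow_succ]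

theorem even_count_rightInvSeq_alternatingWord (i j : B) (t : W) :
    Even ((ris (alternatingWord i j (2 * M i j))).count t) := by
  set f : ℕ → W := fun k => s i * (s j * s i) ^ k
  have hf : ∀ k, f (M i j + k) = f k := by
    intro k
    simp only [f, pow_add, M.symmetric i j ▸ cs.simple_mul_simple_pow j i, one_mul]
  have hlis : lis (alternatingWord i j (2 * M i j)) = (List.range (M i j + M i j)).map f := by
    refine List.ext_getElem (by simp [two_mul]) fun k hk _ => ?_
    rw [getElem_leftInvSeq_alternatingWord cs i j _ k (by simpa using hk),
      prod_alternatingWord_eq_mul_pow]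
    simp [f, Nat.mul_add_div]
  have hris : ris (alternatingWord i j (2 * M i j)) = lis (alternatingWord i j (2 * M i j)) := by
    simp [rightInvSeq_eq_map_leftInvSeq, prod_alternatingWord_eq_mul_pow, cs.simple_mul_simple_pow]
  rw [hris, hlis, List.range_add, List.map_append, List.map_map]
  simp only [Function.comp_def, hf, List.count_append]
  exact ⟨_, rfl⟩

/-- The braid relations hold because the inversion sequence of the braid word `(s i s j) ^ M i j`,
`s i (s j s i) ^ k` for `k < 2 M i j`, has period `M i j`, so it contains every reflection an even
number of times. -/
theorem isLiftable_reflPerm : M.IsLiftable cs.reflPerm := by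
  intro i j
  ext ⟨t, ε⟩ : 1
  rw [← prod_map_alternatingWord, prod_map_reflPerm_apply,
    (even_count_rightInvSeq_alternatingWord cs i j t).neg_one_pow]
  simp [prod_alternatingWord_eq_mul_pow, cs.simple_mul_simple_pow]

def reflRep : W →* Equiv.Perm (W × ℤˣ) :=
  cs.lift ⟨cs.reflPerm, cs.isLiftable_reflPerm⟩

def reflSign (w t : W) : ℤˣ :=
  (cs.reflRep w (t, 1)).2

theorem reflRep_wordProd_apply (ω : List B) (t : W) (ε : ℤˣ) :
    cs.reflRep (π ω) (t, ε) = (π ω * t * (π ω)⁻¹, ε * (-1) ^ (ris ω).count t) := by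
  rw [← prod_map_reflPerm_apply, reflRep, wordProd, map_list_prod, List.map_map]
  congr
  funext i
  exact cs.lift_apply_simple cs.isLiftable_reflPerm i

theorem reflSign_wordProd (ω : List B) (t : W) :
    cs.reflSign (π ω) t = (-1) ^ (ris ω).count t := by
  simp [reflSign, reflRep_wordProd_apply]

theorem reflRep_apply (w t : W) (ε : ℤˣ) :
    cs.reflRep w (t, ε) = (w * t * w⁻¹, ε * cs.reflSign w t) := by
  obtain ⟨ω, -, rfl⟩ := cs.exists_isReduced w
  rw [reflSign_wordProd, reflRep_wordProd_apply]

theorem reflSign_mul (v w t : W) :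
    cs.reflSign (v * w) t = cs.reflSign w t * cs.reflSign v (w * t * w⁻¹) := by
  rw [reflSign, map_mul, Equiv.Perm.mul_apply, reflRep_apply cs w, reflRep_apply cs v, one_mul]

theorem reflSign_one (t : W) : cs.reflSign 1 t = 1 := by
  simp [reflSign]

theorem reflSign_simple_self (i : B) : cs.reflSign (s i) (s i) = -1 := by
  simp [reflSign, reflRep, cs.lift_apply_simple cs.isLiftable_reflPerm, reflPerm_apply]

theorem reflSign_self {t : W} (ht : cs.IsReflection t) : cs.reflSign t t = -1 := by
  obtain ⟨g, i, rfl⟩ := ht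
  have hconj : g⁻¹ * (g * s i * g⁻¹) * g = s i := by group
  have hcancel := cs.reflSign_mul g g⁻¹ (g * s i * g⁻¹)
  rw [mul_inv_cancel, reflSign_one, inv_inv, hconj] at hcancel
  rw [reflSign_mul, reflSign_mul, inv_inv, hconj, reflSign_simple_self]
  calc _ = -(cs.reflSign g⁻¹ (g * s i * g⁻¹) * cs.reflSign g (s i)) := by
        simp [inv_simple, mul_comm]
    _ = -1 := by rw [← hcancel]

theorem reflSign_eq_one_of_length_lt {w t : W} (h : ℓ w < ℓ (w * t)) : cs.reflSign w t = 1 := by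
  obtain ⟨ω, hω, rfl⟩ := cs.exists_isReduced w
  have ht : t ∉ ris ω := fun hmem => by
    have := (cs.isRightInversion_of_mem_rightInvSeq hω hmem).2
    omega
  rw [reflSign_wordProd, List.count_eq_zero_of_not_mem ht, pow_zero]

theorem reflSign_eq_neg_one_of_length_mul_lt {w t : W} (ht : cs.IsReflection t)
    (h : ℓ (w * t) < ℓ w) : cs.reflSign w t = -1 := by
  have htt : w * t * t = w := by rw [mul_assoc, ht.mul_self, mul_one]
  have hup : ℓ (w * t) < ℓ (w * t * t) := by rwa [htt]
  rw [← htt, reflSign_mul, reflSign_self cs ht, show t * t * t⁻¹ = t by group,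
    reflSign_eq_one_of_length_lt cs hup, mul_one]

end ReflectionRepresentation

/-- The strong exchange property. -/
theorem exists_eraseIdx_of_length_mul_lt {ω : List B} {t : W} (ht : cs.IsReflection t)
    (h : ℓ (π ω * t) < ℓ (π ω)) : ∃ j < ω.length, π ω * t = π (ω.eraseIdx j) := by
  classical
  have hsign := cs.reflSign_eq_neg_one_of_length_mul_lt ht h
  have hmem : t ∈ ris ω := by
    rw [reflSign_wordProd] at hsign
    refine List.count_pos_iff.mp (Nat.pos_of_ne_zero fun h0 => ?_)
    rw [h0, pow_zero] at hsign
    exact absurd hsign (by decide)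
  obtain ⟨j, hj, rfl⟩ := List.getElem_of_mem hmem
  refine ⟨j, by simpa using hj, ?_⟩
  rw [← wordProd_mul_getD_rightInvSeq, List.getD_eq_getElem]

theorem exists_reduced_sublist (ω : List B) : ∃ τ, τ.Sublist ω ∧ cs.IsReduced τ ∧ π τ = π ω := by
  induction ω using List.reverseRecOn with
  | nil => exact ⟨[], List.Sublist.refl _, by simp [IsReduced], rfl⟩
  | append_singleton ω b ih =>
    obtain ⟨τ, hsub, hτ, hπ⟩ := ih
    have hπb : π (ω ++ [b]) = π τ * s b := by rw [wordProd_append, wordProd_singleton, hπ]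
    rcases cs.length_mul_simple (π τ) b with hup | hdown
    · refine ⟨τ ++ [b], hsub.append_right [b], ?_, by rw [hπb, wordProd_append, wordProd_singleton]⟩
      rw [IsReduced, wordProd_append, wordProd_singleton, hup, hτ.eq, List.length_append,
        List.length_singleton]
    · obtain ⟨j, hj, hex⟩ :=
        cs.exists_eraseIdx_of_length_mul_lt (ω := τ) (cs.isReflection_simple b) (by omega)
      refine ⟨τ.eraseIdx j,
        (List.eraseIdx_sublist τ j).trans (hsub.trans (List.sublist_append_left ω [b])), ?_,
        by rw [hπb, hex]⟩
      rw [IsReduced, ← hex, List.length_eraseIdx_of_lt hj, ← hτ.eq]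
      omega

variable {cs}

theorem _root_.BruhatLE.refl (w : W) : BruhatLE cs w w := Relation.ReflTransGen.refl

theorem _root_.BruhatLE.trans {u v w : W} (h₁ : BruhatLE cs u v) (h₂ : BruhatLE cs v w) :
    BruhatLE cs u w :=
  Relation.ReflTransGen.trans h₁ h₂

variable (cs)

theorem bruhatLE_mul_of_isReflection {w t : W} (ht : cs.IsReflection t) (h : ℓ w < ℓ (w * t)) :
    BruhatLE cs w (w * t) :=
  Relation.ReflTransGen.single ⟨h, t, ht, rfl⟩

theorem bruhatLE_mul_simple {w : W} {b : B} (h : ℓ w < ℓ (w * s b)) : BruhatLE cs w (w * s b) :=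
  cs.bruhatLE_mul_of_isReflection (cs.isReflection_simple b) h

theorem mul_simple_bruhatLE {w : W} {b : B} (h : cs.IsRightDescent w b) :
    BruhatLE cs (w * s b) w := by
  simpa using cs.bruhatLE_mul_simple (w := w * s b) (b := b) (by simpa [IsRightDescent] using h)

theorem exists_sublist_of_bruhatLE {v : W} {ω : List B} (h : BruhatLE cs v (π ω)) :
    ∃ τ, τ.Sublist ω ∧ π τ = v := by
  generalize hw : π ω = w at h
  induction h generalizing ω with
  | refl => exact ⟨ω, List.Sublist.refl ω, hw⟩
  | tail _ hstep ih =>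
    obtain ⟨hlt, t, ht, rfl⟩ := hstep
    replace ht : cs.IsReflection t := ht
    have htt : ∀ x : W, x * t * t = x := fun x => by rw [mul_assoc, ht.mul_self, mul_one]
    obtain ⟨j, -, hex⟩ := cs.exists_eraseIdx_of_length_mul_lt (ω := ω) ht (by rwa [hw, htt])
    obtain ⟨τ, hτ, hπ⟩ := ih (by rw [← hex, hw, htt])
    exact ⟨τ, hτ.trans (List.eraseIdx_sublist ω j), hπ⟩

def SubwordPropertyUpTo (n : ℕ) : Prop :=
  ∀ ω τ : List B, cs.IsReduced ω → ω.length ≤ n → τ.Sublist ω → BruhatLE cs (π τ) (π ω)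

theorem bruhatLE_cases_of_subword {n : ℕ}
    (hsub : cs.SubwordPropertyUpTo n)
    {v y : W} {b : B} (hn : ℓ y ≤ n) (hv : BruhatLE cs v y) (hy : cs.IsRightDescent y b) :
    (BruhatLE cs v (y * s b) ∧ BruhatLE cs (v * s b) y) ∨ BruhatLE cs (v * s b) (y * s b) := by
  obtain ⟨ω, hω, hωy⟩ := cs.exists_isReduced (y * s b)
  have hlen : ℓ y = ω.length + 1 := by
    have := cs.length_mul_simple y b
    rw [← hω.eq, ← hωy]
    unfold IsRightDescent at hy
    omega
  have hy' : y = π (ω ++ [b]) := by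
    rw [wordProd_append, wordProd_singleton, ← hωy, simple_mul_simple_cancel_right]
  have hred : cs.IsReduced (ω ++ [b]) := by
    rw [IsReduced, ← hy', hlen, List.length_append, List.length_singleton]
  rw [hωy]
  subst hy'
  obtain ⟨τ, hτ, rfl⟩ := cs.exists_sublist_of_bruhatLE hv
  obtain ⟨τ, τ₂, rfl, h₁, h₂⟩ := List.sublist_append_iff.mp hτ
  rcases List.sublist_singleton.mp h₂ with rfl | rfl
  · refine Or.inl ⟨by simpa using hsub ω τ hω (by omega) h₁, ?_⟩
    simpa [wordProd_append] using hsub _ _ hred (by simp; omega) (h₁.append_right [b])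
  · right
    simpa [wordProd_append] using hsub ω τ hω (by omega) h₁

theorem mul_simple_bruhatLE_mul_simple_of_subword {n : ℕ}
    (hsub : cs.SubwordPropertyUpTo n)
    {v w : W} {b : B} (h : BruhatLE cs v w) (hn : ℓ w ≤ n) (hw : ℓ w < ℓ (w * s b)) :
    BruhatLE cs (v * s b) (w * s b) := by
  induction h with
  | refl => exact .refl _
  | @tail x _ hvx hstep ih =>
    obtain ⟨hxy, t, ht, rfl⟩ := hstep
    replace ht : cs.IsReflection t := ht
    rcases cs.length_mul_simple x b with hx | hx
    · have hrefl : cs.IsReflection (s b * t * s b) := by simpa using ht.conj (s b)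
      have heq : x * s b * (s b * t * s b) = x * t * s b := by simp [mul_assoc]
      have hxs := cs.bruhatLE_mul_of_isReflection hrefl (w := x * s b) (by rw [heq]; omega)
      exact (ih (by omega) (by omega)).trans (heq ▸ hxs)
    · have hxb : cs.IsRightDescent x b := by unfold IsRightDescent; omega
      have hvx' : BruhatLE cs (v * s b) x := by
        rcases cs.bruhatLE_cases_of_subword hsub (by omega) hvx hxb with ⟨-, h⟩ | h
        · exact h
        · exact h.trans (cs.mul_simple_bruhatLE hxb)
      exact hvx'.trans ((cs.bruhatLE_mul_of_isReflection ht hxy).trans (cs.bruhatLE_mul_simple hw))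

theorem subwordPropertyUpTo (n : ℕ) : cs.SubwordPropertyUpTo n := by
  induction n with
  | zero =>
    intro ω τ _ hlen h
    obtain rfl := List.eq_nil_of_length_eq_zero (Nat.le_zero.mp hlen)
    obtain rfl := List.sublist_nil.mp h
    exact .refl _
  | succ n ih =>
    intro ω τ hω hlen h
    rcases List.eq_nil_or_concat' ω with rfl | ⟨ω, b, rfl⟩
    · obtain rfl := List.sublist_nil.mp h
      exact .refl _
    have hω' : cs.IsReduced ω := by simpa using hω.take ω.length
    have hup : ℓ (π ω) < ℓ (π ω * s b) := by
      have := hω.eq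
      rw [wordProd_append, wordProd_singleton, List.length_append, List.length_singleton,
        ← hω'.eq] at this
      omega
    have hlen' : ω.length ≤ n := by simp at hlen; omega
    obtain ⟨τ, τ₂, rfl, h₁, h₂⟩ := List.sublist_append_iff.mp h
    have hτ := ih ω τ hω' hlen' h₁
    rw [wordProd_append, wordProd_append, wordProd_singleton]
    rcases List.sublist_singleton.mp h₂ with rfl | rfl
    · simpa using hτ.trans (cs.bruhatLE_mul_simple hup)
    · simpa using cs.mul_simple_bruhatLE_mul_simple_of_subword ih hτ (hω'.eq ▸ hlen') hup

theorem bruhatLE_wordProd_of_sublist {ω τ : List B} (hω : cs.IsReduced ω) (h : τ.Sublist ω) :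
    BruhatLE cs (π τ) (π ω) :=
  cs.subwordPropertyUpTo ω.length ω τ hω le_rfl h

variable {cs}

theorem _root_.BruhatLE.mul_simple_mul_simple_of_length_lt {v w : W} {b : B}
    (h : BruhatLE cs v w) (hw : ℓ w < ℓ (w * s b)) : BruhatLE cs (v * s b) (w * s b) :=
  cs.mul_simple_bruhatLE_mul_simple_of_subword (cs.subwordPropertyUpTo _) h le_rfl hw

theorem _root_.BruhatLE.cases_of_isRightDescent {v w : W} {b : B} (h : BruhatLE cs v w)
    (hw : cs.IsRightDescent w b) :
    (BruhatLE cs v (w * s b) ∧ BruhatLE cs (v * s b) w) ∨ BruhatLE cs (v * s b) (w * s b) :=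
  cs.bruhatLE_cases_of_subword (cs.subwordPropertyUpTo _) le_rfl h hw

theorem _root_.BruhatLE.mul_simple_left_of_isRightDescent {v w : W} {b : B}
    (h : BruhatLE cs v w) (hw : cs.IsRightDescent w b) : BruhatLE cs (v * s b) w := by
  rcases h.cases_of_isRightDescent hw with ⟨-, h⟩ | h
  · exact h
  · exact h.trans (cs.mul_simple_bruhatLE hw)

theorem _root_.BruhatLE.le_mul_simple_of_isRightDescent {v w : W} {b : B}
    (h : BruhatLE cs v w) (hv : ℓ v < ℓ (v * s b)) (hw : cs.IsRightDescent w b) :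
    BruhatLE cs v (w * s b) := by
  rcases h.cases_of_isRightDescent hw with ⟨h, -⟩ | h
  · exact h
  · exact (cs.bruhatLE_mul_simple hv).trans h

theorem _root_.BruhatLE.mul_simple_mul_simple_of_isRightDescent {v w : W} {b : B}
    (h : BruhatLE cs v w) (hv : cs.IsRightDescent v b) (hw : cs.IsRightDescent w b) :
    BruhatLE cs (v * s b) (w * s b) := by
  rcases h.cases_of_isRightDescent hw with ⟨h, -⟩ | h
  · exact (cs.mul_simple_bruhatLE hv).trans h
  · exact h

theorem _root_.BruhatLE.between_mul_simple {x a y : W} {b : B} (hxa : BruhatLE cs x a)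
    (hay : BruhatLE cs a y) (hy : ℓ y < ℓ (y * s b)) :
    (BruhatLE cs (x * s b) a ∧ BruhatLE cs a (y * s b)) ∨
      (BruhatLE cs (x * s b) (a * s b) ∧ BruhatLE cs (a * s b) (y * s b)) := by
  rcases cs.length_mul_simple a b with ha | ha
  · exact Or.inr ⟨hxa.mul_simple_mul_simple_of_length_lt (by omega),
      hay.mul_simple_mul_simple_of_length_lt hy⟩
  · exact Or.inl ⟨hxa.mul_simple_left_of_isRightDescent (by unfold IsRightDescent; omega),
      hay.trans (cs.bruhatLE_mul_simple hy)⟩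

theorem _root_.BruhatLE.between_of_between_mul_simple {x a y : W} {b : B}
    (hxa : BruhatLE cs (x * s b) a) (hay : BruhatLE cs a (y * s b)) (hx : ℓ x < ℓ (x * s b))
    (hy : ℓ y < ℓ (y * s b)) :
    (BruhatLE cs x a ∧ BruhatLE cs a y) ∨ (BruhatLE cs x (a * s b) ∧ BruhatLE cs (a * s b) y) := by
  have hxb : cs.IsRightDescent (x * s b) b := by simpa [IsRightDescent] using hx
  have hyb : cs.IsRightDescent (y * s b) b := by simpa [IsRightDescent] using hy
  rcases cs.length_mul_simple a b with ha | ha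
  · refine Or.inl ⟨(cs.bruhatLE_mul_simple hx).trans hxa, ?_⟩
    simpa using hay.le_mul_simple_of_isRightDescent (by omega) hyb
  · have hab : cs.IsRightDescent a b := by unfold IsRightDescent; omega
    exact Or.inr ⟨by simpa using hxa.mul_simple_mul_simple_of_isRightDescent hxb hab,
      by simpa using hay.mul_simple_mul_simple_of_isRightDescent hab hyb⟩

variable (cs)

theorem wordProd_mem_closure {J : Set B} {ω : List B} (hω : ∀ b ∈ ω, b ∈ J) :
    π ω ∈ Subgroup.closure (cs.simple '' J) :=
  Subgroup.list_prod_mem _ fun _ hx => by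
    obtain ⟨b, hb, rfl⟩ := List.mem_map.mp hx
    exact Subgroup.subset_closure ⟨b, hω b hb, rfl⟩

theorem exists_reduced_word_of_mem_closure {J : Set B} {r : W}
    (hr : r ∈ Subgroup.closure (cs.simple '' J)) :
    ∃ ω, cs.IsReduced ω ∧ (∀ b ∈ ω, b ∈ J) ∧ π ω = r := by
  have hword : ∃ ω : List B, (∀ b ∈ ω, b ∈ J) ∧ π ω = r := by
    induction hr using Subgroup.closure_induction with
    | mem x hx =>
      obtain ⟨i, hi, rfl⟩ := hx
      exact ⟨[i], by simpa using hi, wordProd_singleton cs i⟩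
    | one => exact ⟨[], by simp, wordProd_nil cs⟩
    | mul x y _ _ hx hy =>
      obtain ⟨ω₁, h₁, rfl⟩ := hx
      obtain ⟨ω₂, h₂, rfl⟩ := hy
      exact ⟨ω₁ ++ ω₂, by simpa using fun b hb => hb.elim (h₁ b) (h₂ b), wordProd_append cs _ _⟩
    | inv x _ hx =>
      obtain ⟨ω, h, rfl⟩ := hx
      exact ⟨ω.reverse, by simpa using h, wordProd_reverse cs ω⟩
  obtain ⟨ω, hωJ, rfl⟩ := hword
  obtain ⟨τ, hτ, hred, hπ⟩ := cs.exists_reduced_sublist ω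
  exact ⟨τ, hred, fun b hb => hωJ b (hτ.subset hb), hπ⟩

theorem exists_isRightDescent_of_mem_closure {J : Set B} {r : W}
    (hr : r ∈ Subgroup.closure (cs.simple '' J)) (hne : r ≠ 1) :
    ∃ b ∈ J, cs.IsRightDescent r b := by
  obtain ⟨β, hβ, hβJ, rfl⟩ := cs.exists_reduced_word_of_mem_closure hr
  rcases List.eq_nil_or_concat' β with rfl | ⟨β, b, rfl⟩
  · exact absurd (wordProd_nil cs) hne
  refine ⟨b, hβJ b (by simp), ?_⟩
  have := cs.length_wordProd_le β
  rw [IsRightDescent, hβ.eq, wordProd_append, wordProd_singleton, simple_mul_simple_cancel_right]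
  simp only [List.length_append, List.length_singleton]
  omega

theorem length_mul_wordProd_lt_mul_simple_of_forall_length_le {J : Set B} {x : W} {β : List B}
    {b : B} (hmin : ∀ q ∈ Subgroup.closure (cs.simple '' J), ℓ x ≤ ℓ (x * q))
    (hβ : cs.IsReduced (β ++ [b])) (hβJ : ∀ c ∈ β ++ [b], c ∈ J) :
    ℓ (x * π β) < ℓ (x * π β * s b) := by
  have hβJ' : ∀ c ∈ β, c ∈ J := fun c hc => hβJ c (by simp [hc])
  have hlen : ℓ (π β * s b) = β.length + 1 := by simpa [wordProd_append] using hβ.eq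
  rcases cs.length_mul_simple (x * π β) b with hup | hdown
  · omega
  exfalso
  obtain ⟨α, hα, rfl⟩ := cs.exists_isReduced x
  obtain ⟨j, -, hex⟩ := cs.exists_eraseIdx_of_length_mul_lt (ω := α ++ β)
    (cs.isReflection_simple b) (by rw [wordProd_append]; omega)
  obtain ⟨ρ₁, ρ₂, hρ, h₁, h₂⟩ := List.sublist_append_iff.mp ((α ++ β).eraseIdx_sublist j)
  rw [hρ, wordProd_append, wordProd_append] at hex
  by_cases hρ₁ : ρ₁ = α
  · subst hρ₁
    have hβρ : π β * s b = π ρ₂ := by simpa [mul_assoc] using hex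
    rw [hβρ] at hlen
    have := cs.length_wordProd_le ρ₂
    have := h₂.length_le
    omega
  · have hlt : ρ₁.length < α.length := lt_of_le_of_ne h₁.length_le (mt h₁.eq_of_length hρ₁)
    have hq : π β * s b * (π ρ₂)⁻¹ ∈ Subgroup.closure (cs.simple '' J) :=
      mul_mem (mul_mem (cs.wordProd_mem_closure hβJ')
        (Subgroup.subset_closure ⟨b, hβJ b (by simp), rfl⟩))
        (inv_mem (cs.wordProd_mem_closure fun c hc => hβJ' c (h₂.subset hc)))
    have hxq := hmin _ hq
    rw [show π α * (π β * s b * (π ρ₂)⁻¹) = π ρ₁ by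
      rw [← mul_assoc, ← mul_assoc, hex, mul_inv_cancel_right]] at hxq
    have := cs.length_wordProd_le ρ₁
    rw [hα.eq] at hxq
    omega

theorem length_mul_eq_of_forall_length_le {J : Set B} {x r : W}
    (hmin : ∀ q ∈ Subgroup.closure (cs.simple '' J), ℓ x ≤ ℓ (x * q))
    (hr : r ∈ Subgroup.closure (cs.simple '' J)) : ℓ (x * r) = ℓ x + ℓ r := by
  obtain ⟨β, hβ, hβJ, rfl⟩ := cs.exists_reduced_word_of_mem_closure hr
  rw [hβ.eq]
  clear hr
  induction β using List.reverseRecOn with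
  | nil => simp
  | append_singleton β b ih =>
    have hx := ih (by simpa using hβ.take β.length) fun c hc => hβJ c (by simp [hc])
    have := cs.length_mul_wordProd_lt_mul_simple_of_forall_length_le hmin hβ hβJ
    rw [wordProd_append, wordProd_singleton, ← mul_assoc, List.length_append,
      List.length_singleton]
    have := cs.length_mul_simple (x * π β) b
    omega

theorem length_mul_eq_of_forall_length_lt_mul_simple {J : Set B} {x r : W}
    (hx : ∀ j ∈ J, ℓ x < ℓ (x * s j)) (hr : r ∈ Subgroup.closure (cs.simple '' J)) :
    ℓ (x * r) = ℓ x + ℓ r := by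
  obtain ⟨q₀, hq₀, hmin⟩ := (InvImage.wf (fun q => ℓ (x * q)) wellFounded_lt).has_min
    (Subgroup.closure (cs.simple '' J) : Set W) ⟨1, one_mem _⟩
  have hadd : ∀ r ∈ Subgroup.closure (cs.simple '' J), ℓ (x * q₀ * r) = ℓ (x * q₀) + ℓ r :=
    fun r hr => cs.length_mul_eq_of_forall_length_le
      (fun q hq => not_lt.mp (by rw [mul_assoc]; exact hmin _ (mul_mem hq₀ hq))) hr
  suffices hq₀1 : q₀ = 1 by simpa [hq₀1] using hadd r hr
  by_contra hne
  obtain ⟨b, hb, hdesc⟩ :=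
    cs.exists_isRightDescent_of_mem_closure (inv_mem hq₀) (inv_ne_one.mpr hne)
  have h₁ := hadd _ (inv_mem hq₀)
  have h₂ := hadd _ (mul_mem (inv_mem hq₀) (Subgroup.subset_closure ⟨b, hb, rfl⟩))
  simp only [mul_inv_cancel_right, ← mul_assoc] at h₁ h₂
  have := hx b hb
  unfold IsRightDescent at hdesc
  omega

theorem length_mul_wordProd_of_append_singleton {y : W} {β : List B} {b : B}
    (h : ℓ (y * π (β ++ [b])) = ℓ y + (β ++ [b]).length) :
    ℓ (y * π β) = ℓ y + β.length ∧ ℓ (y * π β) < ℓ (y * π β * s b) := by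
  rw [wordProd_append, wordProd_singleton, ← mul_assoc, List.length_append,
    List.length_singleton] at h
  have := cs.length_mul_le y (π β)
  have := cs.length_wordProd_le β
  have := cs.length_mul_simple (y * π β) b
  omega

theorem exists_between_mul_wordProd {J : Set B} {x a y : W} {β : List B} (hβ : ∀ b ∈ β, b ∈ J)
    (hy : ℓ (y * π β) = ℓ y + β.length) (hxa : BruhatLE cs x a) (hay : BruhatLE cs a y) :
    ∃ c ∈ Subgroup.closure (cs.simple '' J),
      BruhatLE cs (x * π β) (a * c) ∧ BruhatLE cs (a * c) (y * π β) := by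
  induction β using List.reverseRecOn with
  | nil => exact ⟨1, one_mem _, by simpa using hxa, by simpa using hay⟩
  | append_singleton β b ih =>
    obtain ⟨hyβ, hup⟩ := cs.length_mul_wordProd_of_append_singleton hy
    obtain ⟨c, hc, h₁, h₂⟩ := ih (fun b' hb' => hβ b' (by simp [hb'])) hyβ
    have hb : s b ∈ Subgroup.closure (cs.simple '' J) :=
      Subgroup.subset_closure ⟨b, hβ b (by simp), rfl⟩
    simp only [wordProd_append, wordProd_singleton, ← mul_assoc]
    rcases h₁.between_mul_simple h₂ hup with ⟨h₁, h₂⟩ | ⟨h₁, h₂⟩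
    · exact ⟨c, hc, h₁, h₂⟩
    · exact ⟨c * s b, mul_mem hc hb, by rwa [← mul_assoc], by rwa [← mul_assoc]⟩

theorem exists_between_of_between_mul_wordProd {J : Set B} {x a y : W} {β : List B}
    (hβ : ∀ b ∈ β, b ∈ J) (hx : ℓ (x * π β) = ℓ x + β.length) (hy : ℓ (y * π β) = ℓ y + β.length)
    (hxa : BruhatLE cs (x * π β) a) (hay : BruhatLE cs a (y * π β)) :
    ∃ c ∈ Subgroup.closure (cs.simple '' J), BruhatLE cs x (a * c) ∧ BruhatLE cs (a * c) y := by
  induction β using List.reverseRecOn generalizing a with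
  | nil => exact ⟨1, one_mem _, by simpa using hxa, by simpa using hay⟩
  | append_singleton β b ih =>
    obtain ⟨hxβ, hxup⟩ := cs.length_mul_wordProd_of_append_singleton hx
    obtain ⟨hyβ, hyup⟩ := cs.length_mul_wordProd_of_append_singleton hy
    have hβ' : ∀ b' ∈ β, b' ∈ J := fun b' hb' => hβ b' (by simp [hb'])
    have hb : s b ∈ Subgroup.closure (cs.simple '' J) :=
      Subgroup.subset_closure ⟨b, hβ b (by simp), rfl⟩
    simp only [wordProd_append, wordProd_singleton, ← mul_assoc] at hxa hay
    rcases hxa.between_of_between_mul_simple hay hxup hyup with ⟨h₁, h₂⟩ | ⟨h₁, h₂⟩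
    · exact ih hβ' hxβ hyβ h₁ h₂
    · obtain ⟨c, hc, h₁, h₂⟩ := ih hβ' hxβ hyβ h₁ h₂
      exact ⟨s b * c, mul_mem hb hc, by rwa [← mul_assoc], by rwa [← mul_assoc]⟩

theorem exists_between_mul {J : Set B} {x a y r : W} (hr : r ∈ Subgroup.closure (cs.simple '' J))
    (hy : ℓ (y * r) = ℓ y + ℓ r) (hxa : BruhatLE cs x a) (hay : BruhatLE cs a y) :
    ∃ c ∈ Subgroup.closure (cs.simple '' J),
      BruhatLE cs (x * r) (a * c) ∧ BruhatLE cs (a * c) (y * r) := by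
  obtain ⟨β, hβ, hβJ, rfl⟩ := cs.exists_reduced_word_of_mem_closure hr
  exact cs.exists_between_mul_wordProd hβJ (hβ.eq ▸ hy) hxa hay

theorem exists_between_of_between_mul {J : Set B} {x a y r : W}
    (hr : r ∈ Subgroup.closure (cs.simple '' J)) (hx : ℓ (x * r) = ℓ x + ℓ r)
    (hy : ℓ (y * r) = ℓ y + ℓ r) (hxa : BruhatLE cs (x * r) a) (hay : BruhatLE cs a (y * r)) :
    ∃ c ∈ Subgroup.closure (cs.simple '' J), BruhatLE cs x (a * c) ∧ BruhatLE cs (a * c) y := by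
  obtain ⟨β, hβ, hβJ, rfl⟩ := cs.exists_reduced_word_of_mem_closure hr
  exact cs.exists_between_of_between_mul_wordProd hβJ (hβ.eq ▸ hx) (hβ.eq ▸ hy) hxa hay

end CoxeterSystem

theorem QJle_chain_characterization_general {M : CoxeterMatrix B} (cs : CoxeterSystem M W)
    (J : Set B) (u v w v' w' : W)
    (hu : ∀ j ∈ J, cs.length u < cs.length (u * cs.simple j))
    (hw : ∀ j ∈ J, cs.length w < cs.length (w * cs.simple j)) :
    (QJle cs J u u v w ∧ QJle cs J v w v' w') ↔
      ∃ r ∈ Subgroup.closure (cs.simple '' J), ∃ r' ∈ Subgroup.closure (cs.simple '' J),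
        cs.length (v * r') = cs.length v + cs.length r' ∧
        BruhatLE cs v' (v * r') ∧ BruhatLE cs (v * r') (u * r) ∧
        BruhatLE cs (u * r) (w * r') ∧ BruhatLE cs (w * r') w' := by
  constructor
  · rintro ⟨⟨r, hr, -, hvu, -, huw⟩, ⟨r', hr', hv, hv', -, hww'⟩⟩
    obtain ⟨c, hc, h₁, h₂⟩ :=
      cs.exists_between_mul hr' (cs.length_mul_eq_of_forall_length_lt_mul_simple hw hr') hvu huw
    rw [mul_assoc] at h₁ h₂
    exact ⟨r * c, mul_mem hr hc, r', hr', hv, hv', h₁, h₂, hww'⟩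
  · rintro ⟨r, hr, r', hr', hv, hv', h₁, h₂, hww'⟩
    obtain ⟨c, hc, h₃, h₄⟩ := cs.exists_between_of_between_mul hr' hv
      (cs.length_mul_eq_of_forall_length_lt_mul_simple hw hr') h₁ h₂
    rw [mul_assoc] at h₃ h₄
    exact ⟨⟨r * c, mul_mem hr hc, cs.length_mul_eq_of_forall_length_lt_mul_simple hu
        (mul_mem hr hc), h₃, .refl _, h₄⟩, ⟨r', hr', hv, hv', h₁.trans h₂, hww'⟩⟩

/-- Characterization of `(u,u) ⪯ (v,w) ⪯ (v',w')` in `Q_J`. -/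
theorem QJle_chain_characterization {M : CoxeterMatrix B} (cs : CoxeterSystem M W)
    (J : Set B) (u v w v' w' : W)
    (hu : ∀ j ∈ J, cs.length u < cs.length (u * cs.simple j))
    (hw : ∀ j ∈ J, cs.length w < cs.length (w * cs.simple j))
    (hw' : ∀ j ∈ J, cs.length w' < cs.length (w' * cs.simple j))
    (hvw : BruhatLE cs v w) (hv'w' : BruhatLE cs v' w') :
    (QJle cs J u u v w ∧ QJle cs J v w v' w') ↔
      ∃ r ∈ Subgroup.closure (cs.simple '' J), ∃ r' ∈ Subgroup.closure (cs.simple '' J),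
        cs.length (v * r') = cs.length v + cs.length r' ∧
        BruhatLE cs v' (v * r') ∧ BruhatLE cs (v * r') (u * r) ∧
        BruhatLE cs (u * r) (w * r') ∧ BruhatLE cs (w * r') w' :=
  QJle_chain_characterization_general cs J u v w v' w' hu hw
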